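/- Fix a real c ≥ 0. The following are equivalent: (1) there exists a constant C ≥ 0 such that for every integer n ≥ 1, R(n) ≤ n^{1/2} + (c/2)·n^{1/4} + C; (2) there exists a constant C′ ≥ 0 such that every finite nonempty Sidon set A of integers with k := |A| satisfies diam(A) ≥ k² − c·k^{3/2} − C′·k. -/

import Mathlib

open scoped Classical

noncomputable section

/-- A finite set of integers is a Sidon set if all nontrivial solutions to
`a - b = c - d` are excluded. -/
def IsSidon (A : Finset ℤ) : Prop :=
  ∀ a ∈ A, ∀ b ∈ A, ∀ c ∈ A, ∀ d ∈ A, a - b = c - d → (a = b ∧ c = d) ∨ (a = c ∧ b = d)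

/-- The minimum of a finite set of integers (junk value `0` for `∅`). -/
def Amin (A : Finset ℤ) : ℤ := A.min.getD 0

/-- The maximum of a finite set of integers (junk value `0` for `∅`). -/
def Amax (A : Finset ℤ) : ℤ := A.max.getD 0

/-- The diameter `max A - min A` of a finite set of integers. -/
def diam (A : Finset ℤ) : ℤ := Amax A - Amin A

/-- `A_i^{(T)}`, the number of elements of `A` in the window `[i - T, i)`. -/
def wc (A : Finset ℤ) (T i : ℤ) : ℕ := (A.filter (fun a => i - T ≤ a ∧ a < i)).card

/-- `Ā(A,T) = |A|·T/(T + diam A)`. -/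
def Abar (A : Finset ℤ) (T : ℤ) : ℚ := ((A.card : ℚ) * (T : ℚ)) / ((T : ℚ) + (diam A : ℚ))

/-- `V(A,T)`, the total squared deviation of the window counts from `Ā(A,T)`. -/
def V (A : Finset ℤ) (T : ℤ) : ℚ :=
  ∑ i ∈ Finset.Icc (Amin A + 1) (Amax A + T), ((wc A T i : ℚ) - Abar A T) ^ 2

/-- `S(A,T) = Σ (T - r)` over `1 ≤ r ≤ T - 1` not of the form `a - b` with `a, b ∈ A`. -/
def S (A : Finset ℤ) (T : ℤ) : ℤ :=
  ∑ r ∈ Finset.Icc 1 (T - 1), if ∃ a ∈ A, ∃ b ∈ A, a - b = r then 0 else T - r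

/-- `R(n)`: the maximum cardinality of a Sidon set contained in `[0, n)`. -/
def R (n : ℕ) : ℕ :=
  sSup {k : ℕ | ∃ A : Finset ℤ, IsSidon A ∧ A ⊆ Finset.Ico 0 (n : ℤ) ∧ A.card = k}

/- ## Auxiliary lemmas -/

lemma amin_eq {A : Finset ℤ} (hA : A.Nonempty) : Amin A = A.min' hA := by
  rw [Amin, ← Finset.coe_min' hA]; rfl

lemma amax_eq {A : Finset ℤ} (hA : A.Nonempty) : Amax A = A.max' hA := by
  rw [Amax, ← Finset.coe_max' hA]; rfl

lemma amin_le {A : Finset ℤ} (hA : A.Nonempty) {a : ℤ} (ha : a ∈ A) : Amin A ≤ a := by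
  rw [amin_eq hA]; exact A.min'_le a ha

lemma le_amax {A : Finset ℤ} (hA : A.Nonempty) {a : ℤ} (ha : a ∈ A) : a ≤ Amax A := by
  rw [amax_eq hA]; exact A.le_max' a ha

lemma diam_nonneg {A : Finset ℤ} (hA : A.Nonempty) : 0 ≤ diam A := by
  have h := amin_le hA (A.max'_mem hA)
  rw [← amax_eq hA] at h
  rw [diam]; omega

lemma isSidon_image_add (A : Finset ℤ) (t : ℤ) (h : IsSidon A) :
    IsSidon (A.image (· + t)) := by
  intro a ha b hb c hc d hd habcd
  simp only [Finset.mem_image] at ha hb hc hd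
  obtain ⟨a', ha', rfl⟩ := ha; obtain ⟨b', hb', rfl⟩ := hb
  obtain ⟨c', hc', rfl⟩ := hc; obtain ⟨d', hd', rfl⟩ := hd
  have := h a' ha' b' hb' c' hc' d' hd' (by omega)
  omega

lemma shift_subset_Ico {A : Finset ℤ} (hA : A.Nonempty) :
    A.image (· + (-Amin A)) ⊆ Finset.Ico 0 (diam A + 1) := by
  intro x hx
  simp only [Finset.mem_image] at hx
  obtain ⟨a, ha, rfl⟩ := hx
  have h1 := amin_le hA ha
  have h2 := le_amax hA ha
  simp only [Finset.mem_Ico, diam]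
  omega

lemma R_bddAbove (n : ℕ) :
    n ∈ upperBounds {k : ℕ | ∃ A : Finset ℤ, IsSidon A ∧ A ⊆ Finset.Ico 0 (n : ℤ) ∧ A.card = k} := by
  rintro k ⟨A, -, hsub, rfl⟩
  calc A.card ≤ (Finset.Ico (0:ℤ) (n:ℤ)).card := Finset.card_le_card hsub
    _ = n := by rw [Int.card_Ico]; omega

lemma le_R {n : ℕ} {A : Finset ℤ} (h1 : IsSidon A) (h2 : A ⊆ Finset.Ico 0 (n : ℤ)) :
    A.card ≤ R n :=
  le_csSup ⟨n, R_bddAbove n⟩ ⟨A, h1, h2, rfl⟩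

lemma R_attained (n : ℕ) :
    ∃ A : Finset ℤ, IsSidon A ∧ A ⊆ Finset.Ico 0 (n : ℤ) ∧ A.card = R n := by
  have h := Nat.sSup_mem (s := {k : ℕ | ∃ A : Finset ℤ, IsSidon A ∧ A ⊆ Finset.Ico 0 (n : ℤ) ∧ A.card = k})
    ⟨0, ∅, by intro a ha; simp at ha, by simp, by simp⟩ ⟨n, R_bddAbove n⟩
  exact h

lemma diam_le_of_subset {A : Finset ℤ} {m : ℤ} (hA : A.Nonempty)
    (h : A ⊆ Finset.Ico 0 m) : diam A ≤ m - 1 := by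
  have h1 := h (amin_eq hA ▸ A.min'_mem hA)
  have h2 := h (amax_eq hA ▸ A.max'_mem hA)
  simp only [Finset.mem_Ico] at h1 h2
  rw [diam]; omega

/- ## Real analysis helpers -/

lemma my_sqrt_add_le {a b : ℝ} (ha : 0 ≤ a) (hb : 0 ≤ b) :
    Real.sqrt (a + b) ≤ Real.sqrt a + Real.sqrt b := by
  have h : a + b ≤ (Real.sqrt a + Real.sqrt b)^2 := by
    nlinarith [Real.sq_sqrt ha, Real.sq_sqrt hb,
      mul_nonneg (Real.sqrt_nonneg a) (Real.sqrt_nonneg b)]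
  calc Real.sqrt (a+b) ≤ Real.sqrt ((Real.sqrt a + Real.sqrt b)^2) := Real.sqrt_le_sqrt h
    _ = Real.sqrt a + Real.sqrt b := Real.sqrt_sq (by positivity)

lemma my_sqrt_add_le' {a b : ℝ} (ha : 0 < a) (hb : 0 ≤ b) :
    Real.sqrt (a + b) ≤ Real.sqrt a + b / (2 * Real.sqrt a) := by
  have ht : 0 < Real.sqrt a := Real.sqrt_pos.mpr ha
  have ht2 : Real.sqrt a ^ 2 = a := Real.sq_sqrt ha.le
  have key : a + b ≤ (Real.sqrt a + b / (2 * Real.sqrt a))^2 := by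
    have h1 : (Real.sqrt a + b / (2 * Real.sqrt a))^2
        = a + b + (b / (2 * Real.sqrt a))^2 := by
      field_simp
      nlinarith [ht2]
    nlinarith [sq_nonneg (b / (2 * Real.sqrt a))]
  calc Real.sqrt (a+b) ≤ Real.sqrt ((Real.sqrt a + b / (2 * Real.sqrt a))^2) :=
        Real.sqrt_le_sqrt key
    _ = _ := Real.sqrt_sq (by positivity)

lemma rpow_half_eq (x : ℝ) : x ^ ((1:ℝ)/2) = Real.sqrt x := (Real.sqrt_eq_rpow x).symm

lemma rpow_quarter_eq {x : ℝ} (hx : 0 ≤ x) :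
    x ^ ((1:ℝ)/4) = Real.sqrt (Real.sqrt x) := by
  have : ((1:ℝ)/4) = (1/2) * (1/2) := by norm_num
  rw [this, Real.rpow_mul hx, rpow_half_eq, ← Real.sqrt_eq_rpow]

lemma rpow_three_halves_eq {x : ℝ} (hx : 0 ≤ x) :
    x ^ ((3:ℝ)/2) = x * Real.sqrt x := by
  rcases eq_or_lt_of_le hx with h | h
  · rw [← h, Real.zero_rpow (by norm_num), Real.sqrt_zero, mul_zero]
  · have : ((3:ℝ)/2) = 1 + 1/2 := by norm_num
    rw [this, Real.rpow_add h, Real.rpow_one, ← Real.sqrt_eq_rpow]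

lemma one_le_sqrt {x : ℝ} (hx : 1 ≤ x) : 1 ≤ Real.sqrt x := by
  calc (1:ℝ) = Real.sqrt 1 := Real.sqrt_one.symm
    _ ≤ Real.sqrt x := Real.sqrt_le_sqrt hx

/-- Inversion lemma for the direction (2) → (1). -/
lemma key_inv (c C' : ℝ) (hc : 0 ≤ c) (hC' : 0 ≤ C') :
    ∃ C : ℝ, 0 ≤ C ∧ ∀ x n : ℝ, 1 ≤ x → 1 ≤ n →
      x^2 ≤ n + c*(x*Real.sqrt x) + C'*x →
      x ≤ Real.sqrt n + (c/2)*Real.sqrt (Real.sqrt n) + C := by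
  obtain ⟨B, hBdef⟩ : ∃ B : ℝ, B = C' + c^2/4 := ⟨_, rfl⟩
  have hB : 0 ≤ B := by rw [hBdef]; positivity
  obtain ⟨D, hDdef⟩ : ∃ D : ℝ, D = c/2 + Real.sqrt B := ⟨_, rfl⟩
  have hD : 0 ≤ D := by rw [hDdef]; have := Real.sqrt_nonneg B; linarith
  obtain ⟨G, hGdef⟩ : ∃ G : ℝ, G = B + 2*B*D^2 := ⟨_, rfl⟩
  have hG : 0 ≤ G := by
    rw [hGdef]; have := mul_nonneg hB (sq_nonneg D); linarith
  obtain ⟨Hc, hHdef⟩ : ∃ H : ℝ, H = (c*Real.sqrt 2/2 + (c*D + G))/2 := ⟨_, rfl⟩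
  have hcD : 0 ≤ c*D := mul_nonneg hc hD
  have hH : 0 ≤ Hc := by
    rw [hHdef]
    have h2 : 0 ≤ c*Real.sqrt 2 := mul_nonneg hc (Real.sqrt_nonneg 2)
    linarith
  have hcH : 0 ≤ c/2*Hc := mul_nonneg (by linarith) hH
  refine ⟨c/2*Hc + G, by linarith, ?_⟩
  intro x n hx1 hn1 H0
  have hx0 : (0:ℝ) ≤ x := by linarith
  have hn0 : (0:ℝ) ≤ n := by linarith
  obtain ⟨r, hrdef⟩ : ∃ r : ℝ, r = Real.sqrt x := ⟨_, rfl⟩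
  obtain ⟨s, hsdef⟩ : ∃ s : ℝ, s = Real.sqrt n := ⟨_, rfl⟩
  obtain ⟨q, hqdef⟩ : ∃ q : ℝ, q = Real.sqrt s := ⟨_, rfl⟩
  rw [← hrdef] at H0
  have hr0 : 0 ≤ r := hrdef ▸ Real.sqrt_nonneg x
  have hr1 : 1 ≤ r := hrdef ▸ one_le_sqrt hx1
  have hs1 : 1 ≤ s := hsdef ▸ one_le_sqrt hn1
  have hq1 : 1 ≤ q := hqdef ▸ one_le_sqrt hs1
  have hr2 : r^2 = x := by rw [hrdef]; exact Real.sq_sqrt hx0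
  have hs2 : s^2 = n := by rw [hsdef]; exact Real.sq_sqrt hn0
  have hq2 : q^2 = s := by rw [hqdef]; exact Real.sq_sqrt (by linarith)
  suffices hfin : x ≤ s + (c/2)*q + (c/2*Hc + G) by
    rw [hsdef] at hqdef
    rw [hsdef, hqdef] at hfin
    exact hfin
  -- step 1 : x - (c/2) r ≤ √(n + B x)
  have hBx : B*x = C'*x + (c^2/4)*x := by rw [hBdef]; ring
  have hcr : c^2*r^2 = c^2*x := by rw [hr2]
  have e1 : (x - (c/2)*r)^2 ≤ n + B*x := by linarith [H0, hcr, hBx]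
  have H2 : x - (c/2)*r ≤ Real.sqrt (n + B*x) := by
    calc x - (c/2)*r ≤ |x - (c/2)*r| := le_abs_self _
      _ = Real.sqrt ((x - (c/2)*r)^2) := (Real.sqrt_sq_eq_abs _).symm
      _ ≤ Real.sqrt (n + B*x) := Real.sqrt_le_sqrt e1
  have hBx0 : 0 ≤ B*x := mul_nonneg hB hx0
  -- step 2 : √(n + Bx) ≤ s + √B * r
  have H3 : Real.sqrt (n + B*x) ≤ s + Real.sqrt B * r := by
    calc Real.sqrt (n + B*x) ≤ Real.sqrt n + Real.sqrt (B*x) := my_sqrt_add_le hn0 hBx0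
      _ = s + Real.sqrt B * r := by rw [hsdef, hrdef, Real.sqrt_mul hB]
  have hsB : Real.sqrt B * r = (D - c/2)*r := by rw [hDdef]; ring
  have H4 : x ≤ s + D*r := by linarith [H2, H3, hsB]
  -- coarse bound
  have coarse : x ≤ 2*s + 4*D^2 := by
    rcases le_or_gt r (2*D) with hcase | hcase
    · have h1 : r^2 ≤ (2*D)^2 := pow_le_pow_left₀ hr0 hcase 2
      linarith [hr2, h1, hs1]
    · have e : (r/2)*r = x/2 := by rw [← hr2]; ring
      have h1 : D*r ≤ (r/2)*r :=
        mul_le_mul_of_nonneg_right (by linarith) hr0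
      have h2 : 0 ≤ D^2 := sq_nonneg D
      linarith [H4, h1, e]
  -- step 3 : √(n + Bx) ≤ s + G
  have H5 : Real.sqrt (n + B*x) ≤ s + G := by
    have step1 : Real.sqrt (n + B*x) ≤ s + (B*x)/(2*s) := by
      have h := my_sqrt_add_le' (show (0:ℝ) < n by linarith) hBx0
      rwa [← hsdef] at h
    have step2 : (B*x)/(2*s) ≤ G := by
      rw [div_le_iff₀ (show (0:ℝ) < 2*s by linarith)]
      have h1 : B*x ≤ B*(2*s + 4*D^2) := mul_le_mul_of_nonneg_left coarse hB
      have h2 : 0 ≤ B*D^2 := mul_nonneg hB (sq_nonneg D)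
      have h3 : B*D^2 ≤ B*D^2*s := le_mul_of_one_le_right h2 hs1
      rw [hGdef]
      linarith [h1, h3]
    linarith
  have H6 : x ≤ (c/2)*r + s + G := by linarith
  -- step 4 : r ≤ √2 q + 2D
  have H7 : r ≤ Real.sqrt 2 * q + 2*D := by
    have h1 : r ≤ Real.sqrt (2*s + 4*D^2) := by
      rw [hrdef]; exact Real.sqrt_le_sqrt coarse
    have h2 : Real.sqrt (2*s + 4*D^2) ≤ Real.sqrt (2*s) + Real.sqrt (4*D^2) :=
      my_sqrt_add_le (by linarith) (by positivity)
    have h3 : Real.sqrt (2*s) = Real.sqrt 2 * q := by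
      rw [hqdef, Real.sqrt_mul (by norm_num : (0:ℝ) ≤ 2)]
    have h4 : Real.sqrt (4*D^2) = 2*D := by
      rw [show (4:ℝ)*D^2 = (2*D)^2 by ring, Real.sqrt_sq (by linarith)]
    linarith
  -- step 5 : x ≤ s + (c√2/2) q + (cD + G)
  have H8 : x ≤ s + ((c*Real.sqrt 2/2)*q + (c*D + G)) := by
    have h := mul_le_mul_of_nonneg_left H7 (show (0:ℝ) ≤ c/2 by linarith)
    linarith [H6, h]
  -- step 6 : r ≤ q + Hc
  have hG2 : 0 ≤ c*D + G := by linarith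
  have hq0 : 0 ≤ q := by linarith
  have H9 : r ≤ q + Hc := by
    have hab : 0 ≤ (c*Real.sqrt 2/2)*q + (c*D + G) := by
      have h2 : 0 ≤ c*Real.sqrt 2 := mul_nonneg hc (Real.sqrt_nonneg 2)
      have h3 := mul_nonneg h2 hq0
      linarith [h3]
    have h1 : r ≤ Real.sqrt (s + ((c*Real.sqrt 2/2)*q + (c*D + G))) := by
      rw [hrdef]; exact Real.sqrt_le_sqrt H8
    have h2 : Real.sqrt (s + ((c*Real.sqrt 2/2)*q + (c*D + G)))
        ≤ q + ((c*Real.sqrt 2/2)*q + (c*D + G))/(2*q) := by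
      have h := my_sqrt_add_le' (show (0:ℝ) < s by linarith) hab
      rwa [← hqdef] at h
    have h3 : ((c*Real.sqrt 2/2)*q + (c*D + G))/(2*q) ≤ Hc := by
      rw [div_le_iff₀ (show (0:ℝ) < 2*q by linarith), hHdef]
      have h4 : c*D + G ≤ (c*D + G)*q := le_mul_of_one_le_right hG2 hq1
      linarith [h4]
    linarith
  have h := mul_le_mul_of_nonneg_left H9 (show (0:ℝ) ≤ c/2 by linarith)
  linarith [H6, h]

/-- Inversion lemma for the direction (1) → (2). -/
lemma key_inv2 (c C x n : ℝ) (hc : 0 ≤ c) (hC : 0 ≤ C) (hx : 1 ≤ x) (hn : 1 ≤ n)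
    (hnx : n ≤ x^2) (h : x ≤ Real.sqrt n + c/2*Real.sqrt (Real.sqrt n) + C) :
    x^2 - c*(x*Real.sqrt x) - (c^2/4 + 2*C + c*C + C^2 + 1)*x ≤ n - 1 := by
  have hx0 : (0:ℝ) ≤ x := by linarith
  have hn0 : (0:ℝ) ≤ n := by linarith
  obtain ⟨r, hrdef⟩ : ∃ r : ℝ, r = Real.sqrt x := ⟨_, rfl⟩
  obtain ⟨s, hsdef⟩ : ∃ s : ℝ, s = Real.sqrt n := ⟨_, rfl⟩
  obtain ⟨q, hqdef⟩ : ∃ q : ℝ, q = Real.sqrt s := ⟨_, rfl⟩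
  rw [← hsdef] at h
  rw [← hqdef] at h
  rw [← hrdef]
  have hs0 : 0 ≤ s := hsdef ▸ Real.sqrt_nonneg n
  have hq0 : 0 ≤ q := hqdef ▸ Real.sqrt_nonneg s
  have hr0 : 0 ≤ r := hrdef ▸ Real.sqrt_nonneg x
  have hr1 : 1 ≤ r := hrdef ▸ one_le_sqrt hx
  have hs2 : s^2 = n := by rw [hsdef]; exact Real.sq_sqrt hn0
  have hq2 : q^2 = s := by rw [hqdef]; exact Real.sq_sqrt hs0
  have hr2 : r^2 = x := by rw [hrdef]; exact Real.sq_sqrt hx0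
  have hsx : s ≤ x := by
    rw [hsdef]
    calc Real.sqrt n ≤ Real.sqrt (x^2) := Real.sqrt_le_sqrt hnx
      _ = x := Real.sqrt_sq hx0
  have hqr : q ≤ r := by
    rw [hqdef, hrdef]
    exact Real.sqrt_le_sqrt hsx
  have hrx : r ≤ x := by
    have h := mul_le_mul_of_nonneg_left hr1 hr0
    rw [mul_one] at h
    nlinarith [hr2, h]
  have hqx : q ≤ x := le_trans hqr hrx
  have hx2 : x^2 ≤ (s + c/2*q + C)^2 := by
    have hrhs0 : 0 ≤ s + c/2*q + C := by
      have : 0 ≤ c/2*q := mul_nonneg (by linarith) hq0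
      linarith
    exact pow_le_pow_left₀ hx0 h 2
  have hsq : s*q ≤ x*r := mul_le_mul hsx hqr hq0 hx0
  have h1 : c*(s*q) ≤ c*(x*r) := mul_le_mul_of_nonneg_left hsq hc
  have h2 : c^2*s ≤ c^2*x := mul_le_mul_of_nonneg_left hsx (sq_nonneg c)
  have h2' : c^2*q^2 = c^2*s := by rw [hq2]
  have h3 : C*s ≤ C*x := mul_le_mul_of_nonneg_left hsx hC
  have h4 : c*C*q ≤ c*C*x := mul_le_mul_of_nonneg_left hqx (mul_nonneg hc hC)
  have h5 : C^2 ≤ C^2*x := le_mul_of_one_le_right (sq_nonneg C) hx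
  linarith [hx2, h1, h2, h2', h3, h4, h5, hs2, hx]

/-- `R(n) ≤ n^{1/2} + (c/2)·n^{1/4} + O(1)` iff every finite nonempty Sidon set
`A` with `k = |A|` satisfies `diam(A) ≥ k² − c·k^{3/2} − O(k)`. -/
theorem R_bound_iff_diam_bound (c : ℝ) (hc : 0 ≤ c) :
    (∃ C : ℝ, 0 ≤ C ∧ ∀ n : ℕ, 1 ≤ n →
        (R n : ℝ) ≤ (n : ℝ) ^ ((1 : ℝ) / 2) + (c / 2) * (n : ℝ) ^ ((1 : ℝ) / 4) + C) ↔
    (∃ C' : ℝ, 0 ≤ C' ∧ ∀ A : Finset ℤ, A.Nonempty → IsSidon A →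
        (diam A : ℝ) ≥ (A.card : ℝ) ^ 2 - c * (A.card : ℝ) ^ ((3 : ℝ) / 2)
          - C' * (A.card : ℝ)) := by
  constructor
  · -- (1) → (2)
    rintro ⟨C, hC, hR⟩
    refine ⟨c^2/4 + 2*C + c*C + C^2 + 1, by positivity, ?_⟩
    intro A hA hS
    have hk1 : 1 ≤ A.card := Finset.card_pos.mpr hA
    have hd0 : 0 ≤ diam A := diam_nonneg hA
    set d : ℤ := diam A with hddef
    set n : ℕ := d.toNat + 1 with hndef
    have hnd : (n : ℤ) = d + 1 := by rw [hndef]; push_cast [Int.toNat_of_nonneg hd0]; ring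
    have hsub : A.image (· + (-Amin A)) ⊆ Finset.Ico 0 (n : ℤ) := by
      rw [hnd]; exact shift_subset_Ico hA
    have hcard : (A.image (· + (-Amin A))).card = A.card :=
      Finset.card_image_of_injective _ (fun x y hxy => by omega)
    have hkR : A.card ≤ R n := hcard ▸ le_R (isSidon_image_add A _ hS) hsub
    have hRb := hR n (by omega)
    have hnR : ((n : ℕ) : ℝ) = (d : ℝ) + 1 := by exact_mod_cast hnd
    have hx1 : (1:ℝ) ≤ (A.card : ℝ) := by exact_mod_cast hk1
    have hxle : (A.card : ℝ) ≤ Real.sqrt ((d:ℝ)+1)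
        + c/2 * Real.sqrt (Real.sqrt ((d:ℝ)+1)) + C := by
      have hkRc : ((A.card : ℕ) : ℝ) ≤ ((R n : ℕ) : ℝ) := by exact_mod_cast hkR
      rw [rpow_half_eq, rpow_quarter_eq (by positivity)] at hRb
      rw [hnR] at hRb
      linarith
    have h32 : (A.card : ℝ) ^ ((3:ℝ)/2) = (A.card : ℝ) * Real.sqrt (A.card : ℝ) :=
      rpow_three_halves_eq (by positivity)
    rw [ge_iff_le, h32]
    rcases le_or_gt ((A.card : ℤ)^2) d with hcase | hcase
    · have h1 : ((A.card : ℝ))^2 ≤ (d : ℝ) := by exact_mod_cast hcase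
      have h2 : 0 ≤ c * ((A.card:ℝ) * Real.sqrt (A.card:ℝ)) := by positivity
      have h3 : 0 ≤ (c^2/4 + 2*C + c*C + C^2 + 1) * (A.card : ℝ) := by positivity
      linarith
    · have hd1 : d + 1 ≤ (A.card : ℤ)^2 := by omega
      have hnx : (d:ℝ) + 1 ≤ ((A.card : ℝ))^2 := by exact_mod_cast hd1
      have hn1 : (1:ℝ) ≤ (d:ℝ) + 1 := by
        have : (0:ℝ) ≤ (d:ℝ) := by exact_mod_cast hd0
        linarith
      have := key_inv2 c C (A.card : ℝ) ((d:ℝ)+1) hc hC hx1 hn1 hnx hxle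
      linarith
  · -- (2) → (1)
    rintro ⟨C', hC', hD⟩
    obtain ⟨C, hC0, hkey⟩ := key_inv c C' hc hC'
    refine ⟨C, hC0, ?_⟩
    intro n hn
    obtain ⟨A, hS, hsub, hcard⟩ := R_attained n
    rw [← hcard]
    rcases Nat.eq_zero_or_pos A.card with h0 | hpos
    · rw [h0]
      simp only [Nat.cast_zero]
      have : (0:ℝ) ≤ (n:ℝ) := by positivity
      positivity
    · have hA : A.Nonempty := Finset.card_pos.mp hpos
      have hdiam := hD A hA hS
      have hdle : diam A ≤ (n:ℤ) - 1 := diam_le_of_subset hA hsub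
      have hx1 : (1:ℝ) ≤ (A.card : ℝ) := by exact_mod_cast hpos
      have hn1 : (1:ℝ) ≤ (n : ℝ) := by exact_mod_cast hn
      have h32 : (A.card : ℝ) ^ ((3:ℝ)/2) = (A.card : ℝ) * Real.sqrt (A.card : ℝ) :=
        rpow_three_halves_eq (by positivity)
      have hdleR : ((diam A : ℤ) : ℝ) ≤ (n:ℝ) - 1 := by exact_mod_cast hdle
      have hhyp : ((A.card:ℝ))^2 ≤ (n:ℝ) + c*((A.card:ℝ)*Real.sqrt (A.card:ℝ))
          + C'*(A.card:ℝ) := by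
        rw [h32] at hdiam
        linarith [hdiam, hdleR]
      have := hkey (A.card : ℝ) (n : ℝ) hx1 hn1 hhyp
      rw [rpow_half_eq, rpow_quarter_eq (by positivity : (0:ℝ) ≤ (n:ℝ))]
      linarith
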